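/- For the standard words s_k of the Fibonacci slope Φ = [0;2,1,1,1,…], it holds that t_k s_k s_{k+1} s_{k+2} = (s̃_{k+2})² t_{k+1} for all k ≥ 0, where t_k = 01 if k is even and t_k = 10 if k is odd, and s̃ denotes reversal. -/
import Mathlib


/-- The standard (Fibonacci) words of slope `Φ = [0;2,1,1,…]`:
`s₀ = 0`, `s₁ = 01`, `s_k = s_{k−1} s_{k−2}`. -/
def fw : ℕ → List Bool
  | 0 => [false]
  | 1 => [false, true]
  | k + 2 => fw (k + 1) ++ fw k

/-- `t_k = 01` if `k` is even, `t_k = 10` if `k` is odd. -/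
def tk (k : ℕ) : List Bool := if k % 2 = 0 then [false, true] else [true, false]

/-- Palindromic prefixes: `fw (k+1) = P (k+1) ++ tk k`. -/
def P : ℕ → List Bool
  | 0 => []
  | 1 => []
  | 2 => [false]
  | k + 3 => P (k + 2) ++ tk (k + 1) ++ P (k + 1)

lemma tk_two (k : ℕ) : tk (k + 2) = tk k := by
  unfold tk; simp [Nat.add_mod]

lemma tk_rev (k : ℕ) : (tk k).reverse = tk (k + 1) := by
  unfold tk
  rcases Nat.even_or_odd k with h | h
  · have h0 : k % 2 = 0 := Nat.even_iff.mp h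
    have h1 : (k + 1) % 2 = 1 := by omega
    simp [h0, h1]
  · have h0 : k % 2 = 1 := Nat.odd_iff.mp h
    have h1 : (k + 1) % 2 = 0 := by omega
    simp [h0, h1]

lemma fwP : ∀ k, fw (k + 1) = P (k + 1) ++ tk k
  | 0 => rfl
  | 1 => rfl
  | (k + 2) => by
    show fw (k + 2 + 1) = P (k + 3) ++ tk (k + 2)
    have h1 := fwP (k + 1)
    have h2 := fwP k
    show fw (k + 2) ++ fw (k + 1) = P (k + 3) ++ tk (k + 2)
    rw [h1, h2, tk_two]
    show P (k + 2) ++ tk (k + 1) ++ (P (k + 1) ++ tk k)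
        = P (k + 2) ++ tk (k + 1) ++ P (k + 1) ++ tk k
    simp [List.append_assoc]

lemma Tlem : ∀ k, P (k + 2) ++ tk (k + 1) ++ P (k + 1)
    = P (k + 1) ++ tk (k + 2) ++ P (k + 2)
  | 0 => rfl
  | (k + 1) => by
    have ih := Tlem k
    show P (k + 3) ++ tk (k + 2) ++ P (k + 2)
        = P (k + 2) ++ tk (k + 3) ++ P (k + 3)
    show (P (k + 2) ++ tk (k + 1) ++ P (k + 1)) ++ tk (k + 2) ++ P (k + 2)
        = P (k + 2) ++ tk (k + 3) ++ (P (k + 2) ++ tk (k + 1) ++ P (k + 1))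
    rw [tk_two (k + 1)]
    calc (P (k + 2) ++ tk (k + 1) ++ P (k + 1)) ++ tk (k + 2) ++ P (k + 2)
        = P (k + 2) ++ tk (k + 1) ++ (P (k + 1) ++ tk (k + 2) ++ P (k + 2)) := by
          simp [List.append_assoc]
      _ = P (k + 2) ++ tk (k + 1) ++ (P (k + 2) ++ tk (k + 1) ++ P (k + 1)) := by
          rw [← ih]
      _ = P (k + 2) ++ tk (k + 1) ++ (P (k + 2) ++ tk (k + 1) ++ P (k + 1)) := rfl

lemma palP : ∀ k, (P (k + 1)).reverse = P (k + 1)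
  | 0 => rfl
  | 1 => rfl
  | (k + 2) => by
    have ih1 := palP (k + 1)
    have ih2 := palP k
    show (P (k + 3)).reverse = P (k + 3)
    show (P (k + 2) ++ tk (k + 1) ++ P (k + 1)).reverse
        = P (k + 2) ++ tk (k + 1) ++ P (k + 1)
    rw [List.reverse_append, List.reverse_append, ih1, ih2, tk_rev, tk_two]
    calc P (k + 1) ++ (tk k ++ P (k + 2))
        = P (k + 1) ++ tk (k + 2) ++ P (k + 2) := by
          rw [tk_two]; simp [List.append_assoc]
      _ = P (k + 2) ++ tk (k + 1) ++ P (k + 1) := (Tlem k).symm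

/-- `tk k ++ fw k` is a palindrome: `tk k ++ fw k = (fw k).reverse ++ tk (k+1)`. -/
lemma keylem : ∀ k, tk k ++ fw k = (fw k).reverse ++ tk (k + 1)
  | 0 => rfl
  | (k + 1) => by
    rw [fwP k, List.reverse_append, tk_rev, palP k]
    rw [← tk_two k]
    simp [List.append_assoc]

/-- for the standard words of the Fibonacci slope,
`t_k s_k s_{k+1} s_{k+2} = (s̃_{k+2})² t_{k+1}` for all `k ≥ 0`. -/
theorem fibonacci_formula_one (k : ℕ) :
    tk k ++ fw k ++ fw (k + 1) ++ fw (k + 2) =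
      (fw (k + 2)).reverse ++ (fw (k + 2)).reverse ++ tk (k + 1) := by
  have h0 := keylem k
  have h1 := keylem (k + 1)
  have h2 := keylem (k + 2)
  have hrev : (fw (k + 2)).reverse = (fw k).reverse ++ (fw (k + 1)).reverse := by
    show (fw (k + 1) ++ fw k).reverse = _
    rw [List.reverse_append]
  calc tk k ++ fw k ++ fw (k + 1) ++ fw (k + 2)
      = (fw k).reverse ++ (tk (k + 1) ++ fw (k + 1)) ++ fw (k + 2) := by
        rw [← List.append_assoc, ← h0]
    _ = (fw k).reverse ++ ((fw (k + 1)).reverse ++ tk (k + 2)) ++ fw (k + 2) := by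
        rw [h1]
    _ = (fw k).reverse ++ (fw (k + 1)).reverse ++ (tk (k + 2) ++ fw (k + 2)) := by
        simp [List.append_assoc]
    _ = (fw k).reverse ++ (fw (k + 1)).reverse ++ ((fw (k + 2)).reverse ++ tk (k + 3)) := by
        rw [h2]
    _ = (fw (k + 2)).reverse ++ (fw (k + 2)).reverse ++ tk (k + 1) := by
        rw [hrev, tk_two (k + 1)]; simp [List.append_assoc]
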